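/- For every prebiworld w of depth μ and ordinals γ ≤ α ≤ μ, restricting w to α and then to γ equals restricting w directly to γ: (w|_α)|_γ = w|_γ. -/

import Mathlib

open Ordinal

/-- Three truth values: true, false, unknown. -/
inductive TV : Type
  | t | f | u
deriving DecidableEq

namespace TV

/-- Inverse of a truth value. -/
def inv : TV → TV
  | t => f
  | f => t
  | u => u

/-- Binary greatest lower bound in the truth order f ≤ₜ u ≤ₜ t. -/
def tmin : TV → TV → TV
  | f, _ => f
  | _, f => f
  | u, _ => u
  | _, u => u
  | t, t => t

/-- Truth value of a proposition. -/
noncomputable def ofProp (p : Prop) : TV := by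
  classical
  exact if p then t else f

/-- Greatest lower bound of a set of truth values in the truth order f ≤ₜ u ≤ₜ t. -/
noncomputable def tglbSet (s : Set TV) : TV := by
  classical
  exact if f ∈ s then f else if u ∈ s then u else t

/-- Least upper bound of a (chain) set of truth values in the precision order
u ≤ₚ t, u ≤ₚ f. -/
noncomputable def plubSet (s : Set TV) : TV := by
  classical
  exact if t ∈ s then t else if f ∈ s then f else u

/-- Precision order on truth values: u below everything. -/
def ple (a b : TV) : Prop := a = u ∨ a = b

end TV

/-- Formulas of the language COEL. -/
inductive Form (Agent Atom : Type) : Type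
  | atom : Atom → Form Agent Atom
  | neg : Form Agent Atom → Form Agent Atom
  | and : Form Agent Atom → Form Agent Atom → Form Agent Atom
  | K : Agent → Form Agent Atom → Form Agent Atom
  | M : Agent → Form Agent Atom → Form Agent Atom
  | E : Set Agent → Form Agent Atom → Form Agent Atom
  | C : Set Agent → Form Agent Atom → Form Agent Atom

/-- Iterated `E_G` operator: `Eiter G 0 φ = φ`, `Eiter G (k+1) φ = E_G (Eiter G k φ)`. -/
def Form.Eiter {Agent Atom : Type} (G : Set Agent) : ℕ → Form Agent Atom → Form Agent Atom
  | 0, φ => φ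
  | k + 1, φ => .E G (Form.Eiter G k φ)

/-- Modal depth of a COEL formula. -/
noncomputable def Form.MD {Agent Atom : Type} : Form Agent Atom → Ordinal.{0}
  | .atom _ => 0
  | .neg φ => φ.MD
  | .and φ ψ => max φ.MD ψ.MD
  | .K _ φ => φ.MD + 1
  | .M _ φ => φ.MD + 1
  | .E _ φ => φ.MD + 1
  | .C _ φ => φ.MD + omega0

/-- A system of prebiworlds over agents `Agent` and propositional vocabulary `Atom`,
packaging the transfinite construction of μ-prebiworlds for all countable ordinals μ,
together with the recursive equations defining restriction. -/
structure PrebSys (Agent Atom : Type) where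
  /-- the collection of all prebiworlds (of all depths) -/
  W : Type 1
  /-- the depth of a prebiworld -/
  depth : W → Ordinal.{0}
  depth_countable : ∀ w, (depth w).card ≤ Cardinal.aleph0
  /-- the objective interpretation of a prebiworld -/
  obj : W → Set Atom
  /-- for a (μ+1)-prebiworld, the set A^w of μ-prebiworlds deemed (extendibly) possible -/
  poss : Agent → W → Set W
  /-- for a (μ+1)-prebiworld, the set Ā^w of μ-prebiworlds deemed (extendibly) impossible -/
  imposs : Agent → W → Set W
  /-- for a limit-depth prebiworld, its component (w)_α at α < depth w -/
  comp : W → Ordinal.{0} → W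
  /-- the restriction w|_α of w to depth α ≤ depth w -/
  restrict : W → Ordinal.{0} → W
  depth_poss : ∀ (A : Agent) (w v : W), v ∈ poss A w → depth w = depth v + 1
  depth_imposs : ∀ (A : Agent) (w v : W), v ∈ imposs A w → depth w = depth v + 1
  depth_comp : ∀ (w : W) (α : Ordinal.{0}), Order.IsSuccLimit (depth w) → α < depth w →
    depth (comp w α) = α
  comp_mono : ∀ (w : W) (α β : Ordinal.{0}), Order.IsSuccLimit (depth w) → α ≤ β → β < depth w →
    restrict (comp w β) α = comp w α
  ext_zero : ∀ w w' : W, depth w = 0 → depth w' = 0 → obj w = obj w' → w = w'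
  ext_succ : ∀ (w w' : W) (μ : Ordinal.{0}), depth w = μ + 1 → depth w' = μ + 1 →
    obj w = obj w' → (∀ A, poss A w = poss A w') → (∀ A, imposs A w = imposs A w') → w = w'
  ext_limit : ∀ w w' : W, Order.IsSuccLimit (depth w) → depth w' = depth w →
    (∀ α < depth w, comp w α = comp w' α) → w = w'
  depth_restrict : ∀ (w : W) (α : Ordinal.{0}), α ≤ depth w → depth (restrict w α) = α
  restrict_zero : ∀ w : W, obj (restrict w 0) = obj w
  restrict_limit : ∀ (w : W) (α β : Ordinal.{0}), Order.IsSuccLimit α → α ≤ depth w → β < α →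
    comp (restrict w α) β = restrict w β
  restrict_succ_limit : ∀ (w : W) (α : Ordinal.{0}), Order.IsSuccLimit (depth w) →
    α + 1 ≤ depth w → restrict w (α + 1) = comp w (α + 1)
  restrict_succ_obj : ∀ (w : W) (μ α : Ordinal.{0}), depth w = μ + 1 → α + 1 ≤ depth w →
    obj (restrict w (α + 1)) = obj w
  restrict_succ_poss : ∀ (w : W) (μ α : Ordinal.{0}) (A : Agent), depth w = μ + 1 →
    α + 1 ≤ depth w →
    poss A (restrict w (α + 1)) = (fun v => restrict v α) '' poss A w
  restrict_succ_imposs : ∀ (w : W) (μ α : Ordinal.{0}) (A : Agent), depth w = μ + 1 →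
    α + 1 ≤ depth w →
    imposs A (restrict w (α + 1)) = (fun v => restrict v α) '' imposs A w

/-- The precision order: v ≤ₚ w iff w restricted to the depth of v equals v. -/
def PrebSys.lep {Agent Atom : Type} (S : PrebSys Agent Atom) (v w : S.W) : Prop :=
  S.depth v ≤ S.depth w ∧ S.restrict w (S.depth v) = v

/-- A system of biworlds: prebiworlds together with the simultaneously
(transfinite-recursively) defined predicates `Biworld` and `Incompleted`
and their defining clauses. -/
structure BiSys (Agent Atom : Type) extends PrebSys Agent Atom where
  Biworld : W → Prop
  Incompleted : W → Prop
  biworld_zero : ∀ w : W, depth w = 0 → Biworld w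
  biworld_succ : ∀ (w : W) (μ : Ordinal.{0}), depth w = μ + 1 →
    (Biworld w ↔ ∀ A : Agent,
      poss A w ∪ imposs A w = {v | depth v = μ ∧ Biworld v} ∧
      ∀ v ∈ poss A w ∩ imposs A w, Incompleted v)
  biworld_limit : ∀ w : W, Order.IsSuccLimit (depth w) →
    (Biworld w ↔ ∀ α < depth w, Biworld (comp w α))
  incompleted_iff : ∀ w : W, Incompleted w ↔
    ∃ v₁ v₂ : W, v₁ ≠ v₂ ∧ Biworld v₁ ∧ Biworld v₂ ∧
      depth v₁ = depth w + 1 ∧ depth v₂ = depth w + 1 ∧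
      PrebSys.lep toPrebSys w v₁ ∧ PrebSys.lep toPrebSys w v₂

/-- A biworld is completed if it is not incompleted. -/
def BiSys.Completed {Agent Atom : Type} (S : BiSys Agent Atom) (w : S.W) : Prop :=
  ¬ S.Incompleted w

/-- For a limit-depth prebiworld w, the set A↑w. -/
def BiSys.upPoss {Agent Atom : Type} (S : BiSys Agent Atom) (A : Agent) (w : S.W) :
    Set S.W :=
  {v | S.depth v = S.depth w ∧ ∀ α < S.depth w, S.comp v α ∈ S.poss A (S.comp w (α + 1))}

/-- For a limit-depth prebiworld w, the set Ā↑w. -/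
def BiSys.upImposs {Agent Atom : Type} (S : BiSys Agent Atom) (A : Agent) (w : S.W) :
    Set S.W :=
  {v | S.depth v = S.depth w ∧ ∀ α < S.depth w, S.comp v α ∈ S.imposs A (S.comp w (α + 1))}

/-- A system of biworlds together with the three-valued valuation of COEL formulas
and its defining equations. -/
structure ValSys (Agent Atom : Type) extends BiSys Agent Atom where
  val : Form Agent Atom → W → TV
  val_atom : ∀ (P : Atom) (w : W), val (.atom P) w = TV.ofProp (P ∈ obj w)
  val_neg : ∀ (φ : Form Agent Atom) (w : W), val (.neg φ) w = (val φ w).inv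
  val_and : ∀ (φ ψ : Form Agent Atom) (w : W),
    val (.and φ ψ) w = (val φ w).tmin (val ψ w)
  val_K_zero : ∀ (A : Agent) (φ : Form Agent Atom) (w : W), depth w = 0 →
    val (.K A φ) w = TV.u
  val_K_succ : ∀ (A : Agent) (φ : Form Agent Atom) (w : W) (μ : Ordinal.{0}),
    depth w = μ + 1 → val (.K A φ) w = TV.tglbSet (val φ '' poss A w)
  val_K_limit : ∀ (A : Agent) (φ : Form Agent Atom) (w : W), Order.IsSuccLimit (depth w) →
    val (.K A φ) w = TV.plubSet {x | ∃ α < depth w, x = val (.K A φ) (comp w α)}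
  val_M_zero : ∀ (A : Agent) (φ : Form Agent Atom) (w : W), depth w = 0 →
    val (.M A φ) w = TV.u
  val_M_succ : ∀ (A : Agent) (φ : Form Agent Atom) (w : W) (μ : Ordinal.{0}),
    depth w = μ + 1 →
    val (.M A φ) w = TV.tglbSet ((fun v => (val φ v).inv) '' imposs A w)
  val_M_limit : ∀ (A : Agent) (φ : Form Agent Atom) (w : W), Order.IsSuccLimit (depth w) →
    val (.M A φ) w = TV.plubSet {x | ∃ α < depth w, x = val (.M A φ) (comp w α)}
  val_E : ∀ (G : Set Agent) (φ : Form Agent Atom) (w : W),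
    val (.E G φ) w = TV.tglbSet {x | ∃ A ∈ G, x = val (.K A φ) w}
  val_C : ∀ (G : Set Agent) (φ : Form Agent Atom) (w : W),
    val (.C G φ) w = TV.tglbSet {x | ∃ k : ℕ, 1 ≤ k ∧ x = val (Form.Eiter G k φ) w}

/-- A world: a completed (ω²+1)-biworld. -/
def ValSys.World {Agent Atom : Type} (S : ValSys Agent Atom) (w : S.W) : Prop :=
  S.Biworld w ∧ S.depth w = omega0 ^ 2 + 1 ∧ S.toBiSys.Completed w

/-- Accessibility in the canonical Kripke structure K*: w R_A w' iff w'|_{ω²} ∈ A^w. -/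
def ValSys.Racc {Agent Atom : Type} (S : ValSys Agent Atom) (A : Agent)
    (w w' : S.W) : Prop :=
  S.restrict w' (omega0 ^ 2) ∈ S.poss A w

/-- Two-valued Kripke valuation on the canonical Kripke structure K* of worlds. -/
def ValSys.kval {Agent Atom : Type} (S : ValSys Agent Atom) :
    Form Agent Atom → S.W → Prop
  | .atom P, w => P ∈ S.obj w
  | .neg φ, w => ¬ S.kval φ w
  | .and φ ψ, w => S.kval φ w ∧ S.kval ψ w
  | .K A φ, w => ∀ w', S.World w' → S.Racc A w w' → S.kval φ w'
  | .M A φ, w => ∀ w', S.World w' → S.kval φ w' → S.Racc A w w'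
  | .E G φ, w => ∀ A ∈ G, ∀ w', S.World w' → S.Racc A w w' → S.kval φ w'
  | .C G φ, w => ∀ w', Relation.TransGen (fun x y => S.World y ∧ ∃ A ∈ G, S.Racc A x y) w w' →
      S.kval φ w'

/-!
Induction on `γ`. For a limit `γ` both sides are determined by their restrictions below `γ`.
Otherwise, if `α` or `depth w` is a limit, restricting below a limit depth is taking components,
and the claim is the coherence `comp_mono` of the components. In the remaining case `α` and
`depth w` are successors: both sides are compared through their objective parts and the sets
`A^w`, `Ā^w`, where the claim is the induction hypothesis one level down.
-/

namespace PrebSys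

variable {Agent Atom : Type} (S : PrebSys Agent Atom) {w v : S.W} {ν α β γ : Ordinal.{0}}

lemma depth_of_mem_poss {A : Agent} (hw : S.depth w = ν + 1) (hv : v ∈ S.poss A w) :
    S.depth v = ν :=
  Order.add_one_inj.1 (hw ▸ S.depth_poss A w v hv).symm

lemma depth_of_mem_imposs {A : Agent} (hw : S.depth w = ν + 1) (hv : v ∈ S.imposs A w) :
    S.depth v = ν :=
  Order.add_one_inj.1 (hw ▸ S.depth_imposs A w v hv).symm

lemma restrict_zero_eq_of_obj_eq (h : S.obj v = S.obj w) : S.restrict v 0 = S.restrict w 0 :=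
  S.ext_zero _ _ (S.depth_restrict v 0 zero_le) (S.depth_restrict w 0 zero_le)
    (by rw [S.restrict_zero, S.restrict_zero, h])

lemma restrict_eq_restrict_of_isSuccLimit (hγ : Order.IsSuccLimit γ) (hv : γ ≤ S.depth v)
    (hw : γ ≤ S.depth w) (h : ∀ β < γ, S.restrict v β = S.restrict w β) :
    S.restrict v γ = S.restrict w γ := by
  have hdv := S.depth_restrict v γ hv
  refine S.ext_limit _ _ (by rwa [hdv]) (by rw [hdv, S.depth_restrict w γ hw]) fun β hβ => ?_
  rw [hdv] at hβ
  rw [S.restrict_limit v γ β hγ hv hβ, S.restrict_limit w γ β hγ hw hβ, h β hβ]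

/-- `w|_{depth w}` has the same depth as `w` and its components are the restrictions of `w`,
so this is `comp_mono` for `w|_{depth w}`. -/
lemma restrict_restrict_of_isSuccLimit_depth (hw : Order.IsSuccLimit (S.depth w))
    (hγα : γ ≤ α) (hα : α < S.depth w) :
    S.restrict (S.restrict w α) γ = S.restrict w γ := by
  have hd := S.depth_restrict w (S.depth w) le_rfl
  rw [← S.restrict_limit w _ α hw le_rfl hα, ← S.restrict_limit w _ γ hw le_rfl (hγα.trans_lt hα)]
  exact S.comp_mono _ γ α (by rwa [hd]) hγα (by rwa [hd])

lemma restrict_eq_comp (hv : Order.IsSuccLimit (S.depth v)) (hβ : β < S.depth v) :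
    S.restrict v β = S.comp v β := by
  have hβ₁ : β + 1 < S.depth v := hv.add_one_lt hβ
  calc S.restrict v β = S.restrict (S.restrict v (β + 1)) β :=
        (S.restrict_restrict_of_isSuccLimit_depth hv le_self_add hβ₁).symm
    _ = S.restrict (S.comp v (β + 1)) β := by rw [S.restrict_succ_limit v β hv hβ₁.le]
    _ = S.comp v β := S.comp_mono v β (β + 1) hv le_self_add hβ₁

lemma restrict_restrict_of_isSuccLimit (hα : Order.IsSuccLimit α) (hαw : α ≤ S.depth w)
    (hγα : γ < α) : S.restrict (S.restrict w α) γ = S.restrict w γ := by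
  have hd := S.depth_restrict w α hαw
  rw [S.restrict_eq_comp (by rwa [hd]) (by rwa [hd]), S.restrict_limit w α γ hα hαw hγα]

lemma restrict_restrict_add_one_of_depth_eq_add_one (hw : S.depth w = ν + 1)
    (hα : α + 1 ≤ S.depth w) (hγα : γ ≤ α)
    (h : ∀ v, α ≤ S.depth v → S.restrict (S.restrict v α) γ = S.restrict v γ) :
    S.restrict (S.restrict w (α + 1)) (γ + 1) = S.restrict w (γ + 1) := by
  have hαν : α ≤ ν := Order.le_of_lt_add_one (Order.add_one_le_iff.1 (hw ▸ hα))
  have hd := S.depth_restrict w _ hα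
  have hγα' : γ + 1 ≤ α + 1 := add_le_add_left hγα 1
  have hγ : γ + 1 ≤ S.depth w := hγα'.trans hα
  have hγ' : γ + 1 ≤ S.depth (S.restrict w (α + 1)) := hd.symm ▸ hγα'
  refine S.ext_succ _ _ γ (S.depth_restrict _ _ hγ') (S.depth_restrict w _ hγ) ?_ ?_ ?_
  · rw [S.restrict_succ_obj _ α γ hd hγ', S.restrict_succ_obj w ν α hw hα,
      S.restrict_succ_obj w ν γ hw hγ]
  · intro A
    rw [S.restrict_succ_poss _ α γ A hd hγ', S.restrict_succ_poss w ν α A hw hα,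
      S.restrict_succ_poss w ν γ A hw hγ, Set.image_image]
    exact Set.image_congr fun v hv => h v (S.depth_of_mem_poss hw hv ▸ hαν)
  · intro A
    rw [S.restrict_succ_imposs _ α γ A hd hγ', S.restrict_succ_imposs w ν α A hw hα,
      S.restrict_succ_imposs w ν γ A hw hγ, Set.image_image]
    exact Set.image_congr fun v hv => h v (S.depth_of_mem_imposs hw hv ▸ hαν)

end PrebSys

/-- (w|_α)|_γ = w|_γ for γ ≤ α ≤ depth w. -/
theorem restrict_restrict {Agent Atom : Type} (S : PrebSys Agent Atom) (w : S.W)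
    (γ α : Ordinal.{0}) (hγα : γ ≤ α) (hα : α ≤ S.depth w) :
    S.restrict (S.restrict w α) γ = S.restrict w γ := by
  induction γ using WellFoundedLT.induction generalizing w α with
  | _ γ ih =>
  by_cases hγ : Order.IsSuccLimit γ
  · exact S.restrict_eq_restrict_of_isSuccLimit hγ ((S.depth_restrict w α hα).ge.trans' hγα)
      (hγα.trans hα) fun β hβ => ih β hβ w α (hβ.le.trans hγα) hα
  rcases zero_or_succ_or_isSuccLimit α with rfl | ⟨δ, rfl⟩ | hα_lim
  · obtain rfl := nonpos_iff_eq_zero.1 hγα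
    exact S.restrict_zero_eq_of_obj_eq (S.restrict_zero w)
  · rw [Order.succ_eq_add_one] at hγα hα ⊢
    rcases zero_or_succ_or_isSuccLimit (S.depth w) with hw | ⟨ν, hw⟩ | hw
    · exact absurd (Order.add_one_le_iff.1 (hw ▸ hα)) not_lt_zero
    · replace hw : S.depth w = ν + 1 := by rw [← hw, Order.succ_eq_add_one]
      rcases zero_or_succ_or_isSuccLimit γ with rfl | ⟨ε, rfl⟩ | hγ_lim
      · exact S.restrict_zero_eq_of_obj_eq (S.restrict_succ_obj w ν δ hw hα)
      · have hεδ : ε ≤ δ := Order.lt_add_one_iff.1 (Order.succ_le_iff.1 hγα)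
        rw [Order.succ_eq_add_one]
        exact S.restrict_restrict_add_one_of_depth_eq_add_one hw hα hεδ
          (ih ε (Order.lt_succ ε) · δ hεδ)
      · exact absurd hγ_lim hγ
    · exact S.restrict_restrict_of_isSuccLimit_depth hw hγα
        (hα.lt_of_ne fun h => Order.not_isSuccLimit_add_one δ (h ▸ hw))
  · exact S.restrict_restrict_of_isSuccLimit hα_lim hα
      (hγα.lt_of_ne fun h => hγ (h ▸ hα_lim))
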